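/- arXiv:2511.11278 — 2 statements merged into one kernel-verified Lean document; each statement's English description precedes it below -/
import Mathlib

section
/- Let N be a finite set of n divisions and let {N_k}_{k=1}^K with K ≥ 2 be a given partition of N, with n_k = |N_k|. If max_{k ∈ {1,…,K}} n_k ≤ n/2, then there exists a partition (X_k)_{k=1}^K of N (viewed as workers) such that ((N_k, X_k))_{k=1}^K is an assignment partition. -/
open Finset


/-- `((Npart k, Xpart k))_k` is an assignment partition: `Npart` partitions the
divisions, `Xpart` partitions the workers (both identified with `α`), and for each
group `k` we have separation (`Npart k ∩ Xpart k = ∅`) and balance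
(`|Npart k| = |Xpart k|`). -/
def IsAPartition {α : Type*} {K : ℕ} (Npart Xpart : Fin K → Finset α) : Prop :=
  (∀ a : α, ∃! k, a ∈ Npart k) ∧
  (∀ a : α, ∃! k, a ∈ Xpart k) ∧
  (∀ k, ∀ a ∈ Npart k, a ∉ Xpart k) ∧
  (∀ k, (Npart k).card = (Xpart k).card)

open Fin.NatCast in
theorem exists_good_perm {α : Type*} [Fintype α] [DecidableEq α] {K : ℕ}
    (blk : α → Fin K)
    (hmax : ∀ k : Fin K, 2 * (univ.filter fun a => blk a = k).card ≤ Fintype.card α) :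
    ∃ σ : Equiv.Perm α, ∀ a, blk (σ a) ≠ blk a := by
  classical
  set le : α → α → Bool := fun a b => decide (blk a ≤ blk b) with hle
  set l : List α := (Finset.univ (α := α)).toList.mergeSort le with hl
  have hperm : l.Perm (Finset.univ (α := α)).toList := List.mergeSort_perm _ le
  have nd : l.Nodup := hperm.nodup_iff.mpr (Finset.nodup_toList _)
  have hmem : ∀ x : α, x ∈ l := fun x =>
    hperm.mem_iff.mpr (Finset.mem_toList.mpr (mem_univ x))
  have hN : l.length = Fintype.card α := by
    rw [hperm.length_eq, Finset.length_toList, Finset.card_univ]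
  set e := nd.getEquivOfForallMemList l hmem with he
  rcases Nat.eq_zero_or_pos l.length with h0 | hpos
  · have hE : IsEmpty α := ⟨fun a => absurd (e.symm a).isLt (by omega)⟩
    exact ⟨1, fun a => (hE.false a).elim⟩
  have : NeZero l.length := ⟨by omega⟩
  -- sortedness
  have hsorted : List.Pairwise (fun a b => le a b = true) l := by
    apply List.pairwise_mergeSort
    · intro a b c hab hbc
      simp only [hle, decide_eq_true_eq] at *
      exact le_trans hab hbc
    · intro a b
      simp only [hle]
      rcases le_total (blk a) (blk b) with h | h <;> simp [h]
  set g : Fin l.length → Fin K := fun i => blk (e i) with hg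
  have hmono : ∀ i j : Fin l.length, i ≤ j → g i ≤ g j := by
    intro i j hij
    rcases eq_or_lt_of_le hij with h | h
    · rw [h]
    · have := List.pairwise_iff_get.mp hsorted i j h
      simpa [hle, hg, he, List.Nodup.getEquivOfForallMemList] using this
  have hcard : ∀ k, (univ.filter fun i => g i = k).card
      = (univ.filter fun a => blk a = k).card := by
    intro k
    have himg : (univ.filter fun a => blk a = k)
        = (univ.filter fun i => g i = k).image e := by
      ext a
      simp only [mem_filter, mem_univ, true_and, mem_image]
      constructor
      · intro h
        exact ⟨e.symm a, by simpa [hg] using h, e.apply_symm_apply a⟩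
      · rintro ⟨i, hi, rfl⟩; exact hi
    rw [himg, Finset.card_image_of_injective _ e.injective]
  -- max block size
  set m : ℕ := Finset.univ.sup (fun k : Fin K => (univ.filter fun a => blk a = k).card)
    with hm
  have hkm : ∀ k, (univ.filter fun a => blk a = k).card ≤ m :=
    fun k => by rw [hm]; exact Finset.le_sup (f := fun k : Fin K => (univ.filter fun a => blk a = k).card) (mem_univ k)
  have h2m : 2 * m ≤ l.length := by
    rw [hN]
    have : m ≤ Fintype.card α / 2 := by
      apply Finset.sup_le
      intro k _
      exact Nat.le_div_iff_mul_le (by norm_num) |>.mpr (by linarith [hmax k])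
    omega
  have hm1 : 1 ≤ m := by
    set a := e ⟨0, hpos⟩
    have : a ∈ univ.filter fun b => blk b = blk a := by simp
    have := Finset.card_pos.mpr ⟨a, this⟩
    exact le_trans this (hkm _)
  clear_value m
  have hmlt : m < l.length := by omega
  -- contiguity bound
  have hIcc : ∀ a b : Fin l.length, a ≤ b → g a = g b →
      (b : ℕ) - (a : ℕ) + 1 ≤ (univ.filter fun t => g t = g b).card := by
    intro a b hab hgab
    have hsub : Finset.Icc a b ⊆ univ.filter fun t => g t = g b := by
      intro t ht
      rw [Finset.mem_Icc] at ht
      simp only [mem_filter, mem_univ, true_and]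
      exact le_antisymm (hmono t b ht.2) (hgab ▸ hmono a t ht.1)
    have := Finset.card_le_card hsub
    rw [Fin.card_Icc] at this
    rw [Fin.le_def] at hab
    omega
  -- the key claim
  have key : ∀ i : Fin l.length, g (i + (m : Fin l.length)) ≠ g i := by
    intro i hgij
    set j : Fin l.length := i + (m : Fin l.length) with hj
    have hiv := i.isLt
    have hjv : (j : ℕ) = ((i : ℕ) + m) % l.length := by
      rw [hj, Fin.add_def]
      simp [Nat.mod_eq_of_lt hmlt]
    have hb := hkm (g i)
    rw [← hcard] at hb
    rcases Nat.lt_or_ge ((i : ℕ) + m) l.length with hcase | hcase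
    · have hjv' : (j : ℕ) = (i : ℕ) + m := by rw [hjv]; exact Nat.mod_eq_of_lt hcase
      have hij : i ≤ j := by rw [Fin.le_def]; omega
      have h5 := hIcc i j hij hgij.symm
      rw [hgij, hjv'] at h5
      omega
    · have hjv' : (j : ℕ) = (i : ℕ) + m - l.length := by
        rw [hjv, Nat.mod_eq_sub_mod hcase, Nat.mod_eq_of_lt (by omega)]
      have hji : j ≤ i := by rw [Fin.le_def]; omega
      have h5 := hIcc j i hji hgij
      rw [hjv'] at h5
      omega
  refine ⟨e.symm.trans ((Equiv.addRight ((m : Fin l.length))).trans e), fun a => ?_⟩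
  have := key (e.symm a)
  simpa [hg, Equiv.addRight] using this

/-- Sufficiency of the size condition for assignment partitions: if every group of
the given partition `(N_k)` of the divisions has at most half of the divisions,
then there is a partition `(X_k)` of the workers making `((N_k, X_k))_k` an
assignment partition. -/
theorem apartition_sufficiency {α : Type*} [Fintype α] {K : ℕ} (hK : 2 ≤ K)
    (Npart : Fin K → Finset α) (hNpart : ∀ a : α, ∃! k, a ∈ Npart k)
    (hmax : ∀ k, 2 * (Npart k).card ≤ Fintype.card α) :
    ∃ Xpart : Fin K → Finset α, IsAPartition Npart Xpart := by
  classical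
  set blk : α → Fin K := fun a => (hNpart a).choose with hblk
  have hmem : ∀ a, a ∈ Npart (blk a) := fun a => (hNpart a).choose_spec.1
  have huniq : ∀ a k, a ∈ Npart k → k = blk a := fun a k h => (hNpart a).choose_spec.2 k h
  have hiff : ∀ a k, a ∈ Npart k ↔ blk a = k := by
    intro a k
    constructor
    · intro h; exact (huniq a k h).symm
    · rintro rfl; exact hmem a
  have hfib : ∀ k, Npart k = univ.filter fun a => blk a = k := by
    intro k; ext a; simp [hiff a k]
  obtain ⟨σ, hσ⟩ := exists_good_perm blk (fun k => by rw [← hfib]; exact hmax k)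
  refine ⟨fun k => (Npart k).image σ, hNpart, ?_, ?_, ?_⟩
  · intro a
    refine ⟨blk (σ.symm a), ?_, ?_⟩
    · exact Finset.mem_image.mpr ⟨σ.symm a, hmem _, σ.apply_symm_apply a⟩
    · intro k hk
      obtain ⟨b, hb, rfl⟩ := Finset.mem_image.mp hk
      rw [σ.symm_apply_apply]
      exact (huniq b k hb).symm ▸ (huniq b k hb)
  · intro k a ha hX
    obtain ⟨b, hb, rfl⟩ := Finset.mem_image.mp hX
    have h1 : blk (σ b) = k := (hiff _ _).mp ha
    have h2 : blk b = k := (hiff _ _).mp hb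
    exact hσ b (h1.trans h2.symm)
  · intro k
    rw [Finset.card_image_of_injective _ σ.injective]
end

section
/- For every finite set N of divisions, every assignment partition ((N_k, X_k))_{k=1}^K of N, and every strict priority order ▷ on N, the Chain Serial Dictatorship (C-SD) mechanism is strategy-proof: for every division i, every preference profile ≻, and every strict linear order ≻'_i on N, f^C_i(≻) ⪰_i f^C_i(≻'_i, ≻_{-i}). -/
open scoped Classical

/-- Each division has a strict linear (total) preference order over workers. -/
def StrictProfile {α : Type*} (pref : α → α → α → Prop) : Prop :=
  ∀ i, IsStrictTotalOrder α (pref i)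

/-- `pref'` is an improvement for division `i` with respect to `pref`. -/
def Improvement {α : Type*} (pref pref' : α → α → α → Prop) (i : α) : Prop :=
  pref' i = pref i ∧
  (∀ j, j ≠ i → ∀ k, k ≠ i → pref j i k → pref' j i k) ∧
  (∀ j, j ≠ i → ∀ k, k ≠ i → ∀ l, l ≠ i → (pref j k l ↔ pref' j k l))

/-- The `r`-maximum element of the finite set `s` (chosen via Hilbert choice):
the element of `s` that `r`-beats every other element of `s`. -/
noncomputable def pick {α : Type*} [Nonempty α] (r : α → α → Prop) (s : Finset α) : α :=
  Classical.epsilon fun m => m ∈ s ∧ ∀ x ∈ s, x ≠ m → r m x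

/-- The choice set `X_{g(i)}` of division `i`: the worker set of `i`'s group. -/
noncomputable def choiceSet {α : Type*} [DecidableEq α] {K : ℕ}
    (Npart Xpart : Fin K → Finset α) (i : α) : Finset α :=
  Finset.univ.biUnion fun k => if i ∈ Npart k then Xpart k else ∅

/-- An assignment is feasible under the assignment partition if `μ(N_k) = X_k` for all `k`. -/
def FeasibleAP {α : Type*} [DecidableEq α] {K : ℕ}
    (Npart Xpart : Fin K → Finset α) (μ : α → α) : Prop :=
  ∀ k, (Npart k).image μ = Xpart k

/-- Efficiency under the assignment partition: `μ` is feasible and no feasible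
assignment `μ'` weakly improves every division and strictly improves some division. -/
def EfficientAP {α : Type*} [DecidableEq α] {K : ℕ}
    (Npart Xpart : Fin K → Finset α) (pref : α → α → α → Prop) (μ : α → α) : Prop :=
  FeasibleAP Npart Xpart μ ∧
  ¬ ∃ μ' : α → α, Function.Bijective μ' ∧ FeasibleAP Npart Xpart μ' ∧
      (∀ i, μ' i = μ i ∨ pref i (μ' i) (μ i)) ∧ (∃ j, pref j (μ' j) (μ j))

/-- One pass of the Chain Serial Dictatorship: `cur` is the active division,
`active` the set of divisions that have already chosen, `taken` the workers already
assigned and `μ` the partial assignment.  The active division takes its most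
preferred worker in its group's choice set among those not yet taken; the right to
choose passes to the owner of the chosen worker (owner-call) if that owner has not
yet chosen, and otherwise to the `prio`-maximal not-yet-active division (fallback). -/
noncomputable def csdStep {α : Type*} [Fintype α] [DecidableEq α] [Nonempty α] {K : ℕ}
    (Npart Xpart : Fin K → Finset α) (prio : α → α → Prop)
    (pref : α → α → α → Prop) :
    ℕ → α → Finset α → Finset α → (α → α) → (α → α)
  | 0, _, _, _, μ => μ
  | fuel + 1, cur, active, taken, μ =>
    let w := pick (pref cur) (choiceSet Npart Xpart cur \ taken)
    let active' := insert cur active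
    let next := if w ∈ active' then pick prio (Finset.univ \ active') else w
    csdStep Npart Xpart prio pref fuel next active' (insert w taken)
      (Function.update μ cur w)

/-- The Chain Serial Dictatorship (C-SD) mechanism: the first active division is the
`prio`-maximal one, and the chain runs for `|α|` steps so that every division chooses
exactly one worker. -/
noncomputable def csd {α : Type*} [Fintype α] [DecidableEq α] [Nonempty α] {K : ℕ}
    (Npart Xpart : Fin K → Finset α) (prio : α → α → Prop)
    (pref : α → α → α → Prop) : α → α :=
  csdStep Npart Xpart prio pref (Fintype.card α) (pick prio Finset.univ) ∅ ∅ (fun a => a)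

section Aux

variable {α : Type*} [Fintype α] [DecidableEq α] [Nonempty α] {K : ℕ}
  (Npart Xpart : Fin K → Finset α)

lemma exists_rmax {r : α → α → Prop} (h : IsStrictTotalOrder α r)
    {s : Finset α} (hs : s.Nonempty) :
    ∃ m, m ∈ s ∧ ∀ x ∈ s, x ≠ m → r m x := by
  letI : IsStrictTotalOrder α r := h
  letI : DecidableRel r := fun a b => Classical.propDecidable _
  letI := linearOrderOfSTO r
  refine ⟨s.min' hs, s.min'_mem hs, fun x hx hxm => ?_⟩
  exact lt_of_le_of_ne (s.min'_le x hx) (Ne.symm hxm)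

lemma pick_spec {r : α → α → Prop} (h : IsStrictTotalOrder α r)
    {s : Finset α} (hs : s.Nonempty) :
    pick r s ∈ s ∧ ∀ x ∈ s, x ≠ pick r s → r (pick r s) x :=
  Classical.epsilon_spec (exists_rmax h hs)

lemma choiceSet_eq (hpart : IsAPartition Npart Xpart) {i : α} {k : Fin K}
    (hik : i ∈ Npart k) : choiceSet Npart Xpart i = Xpart k := by
  ext x
  simp only [choiceSet, Finset.mem_biUnion, Finset.mem_univ, true_and]
  constructor
  · rintro ⟨j, hj⟩
    by_cases h : i ∈ Npart j
    · have : j = k := (hpart.1 i).unique h hik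
      subst this
      simpa [h] using hj
    · simp [h] at hj
  · exact fun hx => ⟨k, by simp [hik, hx]⟩

/-- The invariant maintained along the C-SD chain. -/
def CsdInv (fuel : ℕ) (cur : α) (active taken : Finset α) : Prop :=
  active.card + fuel = Fintype.card α ∧
  (0 < fuel → cur ∉ active) ∧
  ∀ k, (Xpart k \ taken).card = (Npart k \ active).card

lemma step_inv (hpart : IsAPartition Npart Xpart)
    {prio : α → α → Prop} (hprio : IsStrictTotalOrder α prio)
    {r : α → α → Prop} (hr : IsStrictTotalOrder α r)
    {fuel : ℕ} {cur : α} {active taken : Finset α}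
    (hinv : CsdInv Npart Xpart (fuel + 1) cur active taken) :
    pick r (choiceSet Npart Xpart cur \ taken) ∈ choiceSet Npart Xpart cur \ taken ∧
    (∀ x ∈ choiceSet Npart Xpart cur \ taken,
        x ≠ pick r (choiceSet Npart Xpart cur \ taken) →
        r (pick r (choiceSet Npart Xpart cur \ taken)) x) ∧
    CsdInv Npart Xpart fuel
      (if pick r (choiceSet Npart Xpart cur \ taken) ∈ insert cur active then
          pick prio (Finset.univ \ insert cur active)
        else pick r (choiceSet Npart Xpart cur \ taken))
      (insert cur active)
      (insert (pick r (choiceSet Npart Xpart cur \ taken)) taken) := by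
  obtain ⟨hcard, hcur0, hcnt⟩ := hinv
  have hcur : cur ∉ active := hcur0 (Nat.succ_pos fuel)
  obtain ⟨k0, hk0, _⟩ := hpart.1 cur
  have hcs : choiceSet Npart Xpart cur = Xpart k0 := choiceSet_eq _ _ hpart hk0
  set S := choiceSet Npart Xpart cur \ taken with hS
  have hScur : cur ∈ Npart k0 \ active := Finset.mem_sdiff.mpr ⟨hk0, hcur⟩
  have hSne : S.Nonempty := by
    rw [← Finset.card_pos, hS, hcs, hcnt k0, Finset.card_pos]
    exact ⟨cur, hScur⟩
  obtain ⟨hwS, hwmax⟩ := pick_spec hr hSne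
  set w := pick r S with hw
  refine ⟨hwS, hwmax, ?_, ?_, ?_⟩
  · rw [Finset.card_insert_of_notMem hcur]
    omega
  · intro hf
    by_cases hwa : w ∈ insert cur active
    · rw [if_pos hwa]
      have hne : (Finset.univ \ insert cur active).Nonempty := by
        rw [← Finset.card_pos, Finset.card_sdiff_of_subset (Finset.subset_univ _),
          Finset.card_insert_of_notMem hcur, Finset.card_univ]
        omega
      have := (pick_spec hprio hne).1
      exact (Finset.mem_sdiff.mp this).2
    · rw [if_neg hwa]; exact hwa
  · intro k
    have hwX : w ∈ Xpart k0 := by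
      have := (Finset.mem_sdiff.mp hwS).1
      rwa [hcs] at this
    by_cases hk : k = k0
    · subst hk
      have h1 : Xpart k \ insert w taken = (Xpart k \ taken).erase w := by
        ext x; simp only [Finset.mem_sdiff, Finset.mem_insert, Finset.mem_erase]
        tauto
      have h2 : Npart k \ insert cur active = (Npart k \ active).erase cur := by
        ext x; simp only [Finset.mem_sdiff, Finset.mem_insert, Finset.mem_erase]
        tauto
      rw [h1, h2, Finset.card_erase_of_mem, Finset.card_erase_of_mem hScur, hcnt k]
      rw [hS, hcs] at hwS
      exact hwS
    · have hwX' : w ∉ Xpart k := fun hmem => hk ((hpart.2.1 w).unique hwX hmem).symm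
      have hcN : cur ∉ Npart k := fun hmem => hk ((hpart.1 cur).unique hk0 hmem).symm
      have h1 : Xpart k \ insert w taken = Xpart k \ taken := by
        ext x; simp only [Finset.mem_sdiff, Finset.mem_insert]
        constructor
        · tauto
        · rintro ⟨hx, hxt⟩
          exact ⟨hx, fun h => h.elim (fun e => hwX' (e ▸ hx)) hxt⟩
      have h2 : Npart k \ insert cur active = Npart k \ active := by
        ext x; simp only [Finset.mem_sdiff, Finset.mem_insert]
        constructor
        · tauto
        · rintro ⟨hx, hxt⟩
          exact ⟨hx, fun h => h.elim (fun e => hcN (e ▸ hx)) hxt⟩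
      rw [h1, h2, hcnt k]

lemma csdStep_frozen (hpart : IsAPartition Npart Xpart)
    {prio : α → α → Prop} (hprio : IsStrictTotalOrder α prio)
    {pref : α → α → α → Prop} (hpref : StrictProfile pref) {i : α} :
    ∀ (fuel : ℕ) (cur : α) (active taken : Finset α) (μ : α → α),
      CsdInv Npart Xpart fuel cur active taken → i ∈ active →
      csdStep Npart Xpart prio pref fuel cur active taken μ i = μ i := by
  intro fuel
  induction fuel with
  | zero => intro cur active taken μ _ _; rfl
  | succ n ih =>
    intro cur active taken μ hinv hi
    have hcur : cur ∉ active := hinv.2.1 (Nat.succ_pos n)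
    have hne : i ≠ cur := fun h => hcur (h ▸ hi)
    obtain ⟨hwS, hwmax, hinv'⟩ := step_inv Npart Xpart hpart hprio (hpref cur) hinv
    rw [csdStep]
    rw [ih _ _ _ _ hinv' (Finset.mem_insert_of_mem hi)]
    exact Function.update_of_ne hne _ _

lemma csdStep_main (hpart : IsAPartition Npart Xpart)
    {prio : α → α → Prop} (hprio : IsStrictTotalOrder α prio)
    {pref pref' : α → α → α → Prop}
    (hpref : StrictProfile pref) (hpref' : StrictProfile pref') {i : α}
    (hagree : ∀ j, j ≠ i → pref' j = pref j) :
    ∀ (fuel : ℕ) (cur : α) (active taken : Finset α) (μ : α → α),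
      CsdInv Npart Xpart fuel cur active taken → i ∉ active →
      csdStep Npart Xpart prio pref fuel cur active taken μ i =
        csdStep Npart Xpart prio pref' fuel cur active taken μ i ∨
      pref i (csdStep Npart Xpart prio pref fuel cur active taken μ i)
        (csdStep Npart Xpart prio pref' fuel cur active taken μ i) := by
  intro fuel
  induction fuel with
  | zero => intro cur active taken μ _ _; left; rfl
  | succ n ih =>
    intro cur active taken μ hinv hi
    by_cases hci : cur = i
    · subst hci
      obtain ⟨hwT, hwTmax, hinvT⟩ := step_inv Npart Xpart hpart hprio (hpref cur) hinv
      obtain ⟨hwM, _, hinvM⟩ := step_inv Npart Xpart hpart hprio (hpref' cur) hinv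
      rw [csdStep, csdStep]
      rw [csdStep_frozen Npart Xpart hpart hprio hpref _ _ _ _ _ hinvT
        (Finset.mem_insert_self cur active)]
      rw [csdStep_frozen Npart Xpart hpart hprio hpref' _ _ _ _ _ hinvM
        (Finset.mem_insert_self cur active)]
      rw [Function.update_self, Function.update_self]
      by_cases heq : pick (pref' cur) (choiceSet Npart Xpart cur \ taken) =
          pick (pref cur) (choiceSet Npart Xpart cur \ taken)
      · left; exact heq.symm
      · right; exact hwTmax _ hwM heq
    · have hpc : pref' cur = pref cur := hagree cur hci
      obtain ⟨hwS, hwmax, hinv'⟩ := step_inv Npart Xpart hpart hprio (hpref cur) hinv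
      rw [csdStep, csdStep, hpc]
      exact ih _ _ _ _ hinv' (fun h => hi (Finset.mem_of_mem_insert_of_ne h (Ne.symm hci)))

end Aux

/-- Chain Serial Dictatorship is strategy-proof: for every division `i`, every
preference profile and every misreport `q` of `i`, division `i` weakly prefers the
C-SD outcome under truth-telling to the C-SD outcome under the misreport. -/
theorem csd_strategyproof {α : Type*} [Fintype α] [DecidableEq α] [Nonempty α]
    {K : ℕ} (Npart Xpart : Fin K → Finset α)
    (hpart : IsAPartition Npart Xpart)
    (prio : α → α → Prop) (hprio : IsStrictTotalOrder α prio)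
    (pref : α → α → α → Prop) (hpref : StrictProfile pref)
    (i : α) (q : α → α → Prop) (hq : IsStrictTotalOrder α q) :
    csd Npart Xpart prio pref i = csd Npart Xpart prio (Function.update pref i q) i ∨
    pref i (csd Npart Xpart prio pref i)
      (csd Npart Xpart prio (Function.update pref i q) i) := by
  have hpref' : StrictProfile (Function.update pref i q) := by
    intro j
    by_cases h : j = i
    · subst h; rw [Function.update_self]; exact hq
    · rw [Function.update_of_ne h]; exact hpref j
  have hagree : ∀ j, j ≠ i → Function.update pref i q j = pref j := fun j hj =>
    Function.update_of_ne hj _ _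
  have hinv : CsdInv Npart Xpart (Fintype.card α) (pick prio Finset.univ) ∅ ∅ := by
    refine ⟨by simp, fun _ => Finset.notMem_empty _, fun k => ?_⟩
    simp [hpart.2.2.2 k]
  exact csdStep_main Npart Xpart hpart hprio hpref hpref' hagree
    (Fintype.card α) (pick prio Finset.univ) ∅ ∅ (fun a => a) hinv
    (Finset.notMem_empty i)
end
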